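/- If t ≥ 0, ρ(k) ≥ ρ_c, and (k−1)X + t·w ≤ x ≤ kX + t·w, then the Lax–Hopf solution associated with the k-th initial value condition satisfies M_{M_k}(t, x) = −Σ_{i=1}^{k−1} ρ(i)·X + ρ(k)·(t·w + (k−1)X − x) − ρ_m·t·w. -/
import Mathlib


/-- The triangular fundamental diagram: `ψ(ρ) = v_f·ρ` for `ρ ≤ ρ_c` and
`ψ(ρ) = w·(ρ − ρ_m)` otherwise. -/
noncomputable def fd (vf w ρc ρm : ℝ) (ρ : ℝ) : ℝ :=
  if ρ ≤ ρc then vf * ρ else w * (ρ - ρm)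

/-- The transform `φ*(u) = sup_{p ∈ [0, ρ_m]} (p·u + ψ(p))`. -/
noncomputable def phiStar (vf w ρc ρm : ℝ) (u : ℝ) : ℝ :=
  sSup ((fun p => p * u + fd vf w ρc ρm p) '' Set.Icc 0 ρm)

/-- The Lax–Hopf solution associated with a value condition `c : ℝ × ℝ → ℝ ∪ {+∞}`
(modeled with values in `EReal`):
`M_c(t, x) = inf { c(t − T, x + T·u) + T·φ*(u) : T ≥ 0, u ∈ [−v_f, −w] }`. -/
noncomputable def laxHopf (vf w ρc ρm : ℝ) (c : ℝ × ℝ → EReal) (t x : ℝ) : EReal :=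
  ⨅ (T : ℝ) (_ : 0 ≤ T) (u : ℝ) (_ : u ∈ Set.Icc (-vf) (-w)),
    c (t - T, x + T * u) + ((T * phiStar vf w ρc ρm u : ℝ) : EReal)

/-- The `k`-th initial value condition: for `x ∈ [(k−1)X, kX]`,
`M_k(0, x) = −Σ_{i=1}^{k−1} ρ(i)·X − ρ(k)·(x − (k−1)X)`, and `+∞` elsewhere. -/
noncomputable def initCond (X : ℝ) (ρ : ℕ → ℝ) (k : ℕ) : ℝ × ℝ → EReal := fun p =>
  if p.1 = 0 ∧ ((k : ℝ) - 1) * X ≤ p.2 ∧ p.2 ≤ (k : ℝ) * X then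
    (((-(∑ i ∈ Finset.Icc 1 (k - 1), ρ i * X) - ρ k * (p.2 - ((k : ℝ) - 1) * X)) : ℝ) : EReal)
  else ⊤

lemma phiStar_eq (vf ρc ρm w : ℝ) (hvf : 0 < vf) (hρc : 0 < ρc) (hρcm : ρc < ρm)
    (hkey : w * (ρc - ρm) = vf * ρc) (u : ℝ) (hu : u ∈ Set.Icc (-vf) (-w)) :
    phiStar vf w ρc ρm u = ρc * u + vf * ρc := by
  obtain ⟨hu1, hu2⟩ := hu
  apply IsGreatest.csSup_eq
  constructor
  · refine ⟨ρc, ⟨hρc.le, hρcm.le⟩, ?_⟩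
    simp [fd, mul_comm]
  · rintro y ⟨p, ⟨hp0, hpm⟩, rfl⟩
    by_cases h : p ≤ ρc <;> simp only [fd, if_pos, if_neg, h, if_true, if_false]
    · nlinarith [mul_nonneg (sub_nonneg.2 h) (by linarith : (0:ℝ) ≤ u + vf)]
    · push_neg at h
      nlinarith [mul_nonneg (sub_nonneg.2 h.le) (by linarith : (0:ℝ) ≤ -w - u)]

/-- If `t ≥ 0`, `ρ(k) ≥ ρ_c`, and `(k−1)X + t·w ≤ x ≤ kX + t·w`, then
`M_{M_k}(t, x) = −Σ_{i=1}^{k−1} ρ(i)·X + ρ(k)·(t·w + (k−1)X − x) − ρ_m·t·w`. -/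
theorem laxHopf_initCond_congested_inner (vf ρc ρm w X : ℝ) (hvf : 0 < vf) (hρc : 0 < ρc)
    (hρcm : ρc < ρm) (hw : w = vf * ρc / (ρc - ρm)) (hX : 0 < X)
    (kmax : ℕ) (hkmax : 1 ≤ kmax) (ρ : ℕ → ℝ)
    (hρ : ∀ i : ℕ, 1 ≤ i → i ≤ kmax → ρ i ∈ Set.Icc 0 ρm)
    (k : ℕ) (hk1 : 1 ≤ k) (hk2 : k ≤ kmax) (t x : ℝ) (ht : 0 ≤ t)
    (hρk : ρc ≤ ρ k)
    (hx1 : ((k : ℝ) - 1) * X + t * w ≤ x) (hx2 : x ≤ (k : ℝ) * X + t * w) :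
    laxHopf vf w ρc ρm (initCond X ρ k) t x =
      (((-(∑ i ∈ Finset.Icc 1 (k - 1), ρ i * X)
          + ρ k * (t * w + ((k : ℝ) - 1) * X - x) - ρm * t * w) : ℝ) : EReal) := by
  have hkey : w * (ρc - ρm) = vf * ρc := by
    rw [hw, div_mul_cancel₀ _ (by intro h; nlinarith : ρc - ρm ≠ 0)]
  have hwneg : w < 0 := by nlinarith
  set S : ℝ := ∑ i ∈ Finset.Icc 1 (k - 1), ρ i * X with hS
  apply le_antisymm
  · -- upper bound: take T = t, u = -w
    have hmem : (-w : ℝ) ∈ Set.Icc (-vf) (-w) := ⟨by linarith, le_refl _⟩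
    have step : laxHopf vf w ρc ρm (initCond X ρ k) t x ≤
        initCond X ρ k (t - t, x + t * (-w)) +
          ((t * phiStar vf w ρc ρm (-w) : ℝ) : EReal) := by
      rw [laxHopf]
      exact le_trans (iInf_le _ t) (le_trans (iInf_le _ ht)
        (le_trans (iInf_le _ (-w)) (iInf_le _ hmem)))
    refine le_trans step ?_
    have hcond : (t - t = 0) ∧ ((k : ℝ) - 1) * X ≤ x + t * (-w) ∧
        x + t * (-w) ≤ (k : ℝ) * X := ⟨by ring, by linarith, by linarith⟩
    rw [initCond]
    simp only [if_pos hcond]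
    rw [phiStar_eq vf ρc ρm w hvf hρc hρcm hkey (-w) hmem, ← EReal.coe_add,
      EReal.coe_le_coe_iff]
    have : -S - ρ k * (x + t * (-w) - ((k : ℝ) - 1) * X) +
        t * (ρc * (-w) + vf * ρc) =
        -S + ρ k * (t * w + ((k : ℝ) - 1) * X - x) - ρm * (t * w) := by
      linear_combination (-t) * hkey
    rw [this]
    apply le_of_eq; ring
  · -- lower bound
    rw [laxHopf]
    refine le_iInf fun T => le_iInf fun hT => le_iInf fun u => le_iInf fun hu => ?_
    by_cases hc : (t - T = 0) ∧ ((k : ℝ) - 1) * X ≤ x + T * u ∧ x + T * u ≤ (k : ℝ) * X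
    · have hTt : T = t := by linarith [hc.1]
      rw [initCond]
      simp only [if_pos hc]
      rw [phiStar_eq vf ρc ρm w hvf hρc hρcm hkey u hu, ← EReal.coe_add,
        EReal.coe_le_coe_iff]
      obtain ⟨hu1, hu2⟩ := hu
      subst hTt
      nlinarith [mul_nonneg (mul_nonneg ht (sub_nonneg.2 hρk)) (by linarith : (0:ℝ) ≤ -w - u),
        mul_nonneg ht (sub_nonneg.2 hρk)]
    · rw [initCond]
      simp only [if_neg hc, EReal.top_add_coe]
      exact le_top
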